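/- Let α_1, α_2 ∈ [0, π/2] and take the parametrized observables A^{(1)}_x = cos α_1 σ_X + (−1)^x sin α_1 σ_Z and A^{(2)}_x = cos α_2 σ_A + (−1)^x sin α_2 σ_B. Then the maximal eigenvalue of W'_1 and the maximal eigenvalue of W'_2 are both equal to 2√(1 + sin 2α_1 · sin 2α_2), and the maximal eigenvalue of W'_3 equals 4 sin α_1. In particular, the maximal eigenvalues of W'_1 and W'_2 are at most 2√2, and that of W'_3 is at most 4. -/

import Mathlib

open Matrix ComplexOrder Kronecker

noncomputable section

/-- 2×2 complex matrices. -/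
abbrev Mat2 := Matrix (Fin 2) (Fin 2) ℂ

/-- 4×4 complex matrices (two qubits). -/
abbrev Mat4 := Matrix (Fin 2 × Fin 2) (Fin 2 × Fin 2) ℂ

/-- The Pauli matrix `σ_X`. -/
def σX : Mat2 := !![0, 1; 1, 0]

/-- The Pauli matrix `σ_Z`. -/
def σZ : Mat2 := !![1, 0; 0, -1]

/-- `σ_A = (σ_X + σ_Z)/√2`. -/
def σA : Mat2 := ((Real.sqrt 2 : ℂ))⁻¹ • (σX + σZ)

/-- `σ_B = (σ_X − σ_Z)/√2`. -/
def σB : Mat2 := ((Real.sqrt 2 : ℂ))⁻¹ • (σX - σZ)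

/-- The parametrized observables of the first sender. -/
def A1 (α : ℝ) : Fin 2 → Mat2 := fun x =>
  ((Real.cos α : ℝ) : ℂ) • σX + ((-1 : ℂ) ^ ((x : ℕ)) * ((Real.sin α : ℝ) : ℂ)) • σZ

/-- The parametrized observables of the second sender. -/
def A2 (α : ℝ) : Fin 2 → Mat2 := fun x =>
  ((Real.cos α : ℝ) : ℂ) • σA + ((-1 : ℂ) ^ ((x : ℕ)) * ((Real.sin α : ℝ) : ℂ)) • σB

/-- `W'_1`. -/
def W'1 (α₁ α₂ : ℝ) : Mat4 :=
  (A1 α₁ 0 + A1 α₁ 1) ⊗ₖ A2 α₂ 0 + (A1 α₁ 0 - A1 α₁ 1) ⊗ₖ A2 α₂ 1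

/-- `W'_2`. -/
def W'2 (α₁ α₂ : ℝ) : Mat4 :=
  (-(A1 α₁ 0 + A1 α₁ 1)) ⊗ₖ A2 α₂ 0 + (A1 α₁ 0 - A1 α₁ 1) ⊗ₖ A2 α₂ 1

/-- `W'_3`. -/
def W'3 (α₁ α₂ : ℝ) : Mat4 :=
  (-2 : ℂ) • ((A1 α₁ 0 - A1 α₁ 1) ⊗ₖ A2 α₂ 1)

/-- `c` is the maximal eigenvalue of the Hermitian matrix `W`: `W ≤ c·I` and `c` is
attained by some nonzero eigenvector. -/
def IsMaxEigenvalue (W : Mat4) (c : ℝ) : Prop :=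
  (((c : ℝ) : ℂ) • (1 : Mat4) - W).PosSemidef ∧
    ∃ v : Fin 2 × Fin 2 → ℂ, v ≠ 0 ∧ W.mulVec v = ((c : ℝ) : ℂ) • v

/-!
With `θ = α₂ + π/4` every observable is a real combination `a σ_Z + b σ_X`, and
`W'_1 = 2 cos α₁ σ_X ⊗ Q + 2 sin α₁ σ_Z ⊗ S` with reflections `Q, S`. Squaring gives
`W'_1² = 4 + 4 sin 2α₁ sin 2α₂ M` for the Hermitian involution `M = σ_Xσ_Z ⊗ σ_Xσ_Z`, so
`t² - W'_1² = 4 sin 2α₁ sin 2α₂ (1 - M) ≥ 0` for `t = 2√(1 + sin 2α₁ sin 2α₂)`, and then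
`2t (t - W) = (t - W)² + (t² - W²)` gives `W'_1 ≤ t`. The value `t` is attained because `W'_1`
swaps the product states `y₋ ⊗ y₊` and `y₊ ⊗ y₋` of `σ_Y` eigenvectors with conjugate coefficients
of modulus `t`. `W'_2` is `W'_1` conjugated by the unitary `σ_Z ⊗ 1`, and `W'_3` is `4 sin α₁`
times a Hermitian involution having the eigenvalue `1`.
-/

theorem Matrix.IsHermitian.kronecker {m n 𝕜 : Type*} [RCLike 𝕜] {A : Matrix m m 𝕜}
    {B : Matrix n n 𝕜} (hA : A.IsHermitian) (hB : B.IsHermitian) : (A ⊗ₖ B).IsHermitian := by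
  rw [IsHermitian, conjTranspose_kronecker, hA.eq, hB.eq]

section Hermitian

variable {n 𝕜 : Type*} [Fintype n] [DecidableEq n] [RCLike 𝕜]

theorem Matrix.IsHermitian.posSemidef_one_sub_of_mul_self_eq_one {U : Matrix n n 𝕜}
    (hU : U.IsHermitian) (hUU : U * U = 1) : (1 - U).PosSemidef := by
  have hsq : (1 - U)ᴴ * (1 - U) = (2 : 𝕜) • (1 - U) := by
    rw [conjTranspose_sub, conjTranspose_one, hU.eq, Matrix.sub_mul, Matrix.mul_sub,
      Matrix.mul_sub, hUU]
    simp only [Matrix.one_mul, Matrix.mul_one]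
    module
  have := (posSemidef_conjTranspose_mul_self (1 - U)).smul (inv_nonneg.mpr (zero_le_two (α := 𝕜)))
  rwa [hsq, smul_smul, inv_mul_cancel₀ two_ne_zero, one_smul] at this

theorem Matrix.IsHermitian.posSemidef_smul_one_sub_of_posSemidef_sq_sub {W : Matrix n n 𝕜}
    (hW : W.IsHermitian) {τ : 𝕜} (hτ : 0 < τ) (h : (τ ^ 2 • 1 - W * W).PosSemidef) :
    (τ • 1 - W).PosSemidef := by
  have h2τ : 0 < 2 * τ := mul_pos two_pos hτ
  have key : (τ • 1 - W)ᴴ * (τ • 1 - W) + (τ ^ 2 • 1 - W * W) = (2 * τ) • (τ • 1 - W) := by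
    rw [conjTranspose_sub, conjTranspose_smul, (IsSelfAdjoint.of_nonneg hτ.le).star_eq,
      conjTranspose_one, hW.eq]
    simp only [Matrix.sub_mul, Matrix.mul_sub, Matrix.smul_mul, Matrix.mul_smul, Matrix.one_mul,
      Matrix.mul_one]
    module
  have := ((posSemidef_conjTranspose_mul_self (τ • 1 - W)).add h).smul (inv_nonneg.mpr h2τ.le)
  rwa [key, smul_smul, inv_mul_cancel₀ h2τ.ne', one_smul] at this

end Hermitian

theorem mulVec_smul_add_smul_eq_smul {ι R : Type*} [Fintype ι] [CommRing R] {W : Matrix ι ι R}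
    {u u' : ι → R} {a b t : R} (hu : W *ᵥ u = a • u') (hu' : W *ᵥ u' = b • u)
    (hab : a * b = t * t) : W *ᵥ (t • u + a • u') = t • (t • u + a • u') := by
  rw [mulVec_add, mulVec_smul, mulVec_smul, hu, hu', smul_smul, smul_smul, hab]
  module

def tensorVec {m n R : Type*} [Mul R] (x : m → R) (y : n → R) : m × n → R :=
  fun p => x p.1 * y p.2

section TensorVec

variable {l m n p R : Type*} [CommSemiring R]

theorem kronecker_mulVec_tensorVec [Fintype m] [Fintype p] (A : Matrix l m R) (B : Matrix n p R)
    (x : m → R) (y : p → R) : (A ⊗ₖ B) *ᵥ tensorVec x y = tensorVec (A *ᵥ x) (B *ᵥ y) := by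
  ext ⟨i, j⟩
  simp only [mulVec, dotProduct, tensorVec, kroneckerMap_apply, Fintype.sum_prod_type,
    Finset.sum_mul_sum]
  exact Finset.sum_congr rfl fun _ _ => Finset.sum_congr rfl fun _ _ => by ring

theorem tensorVec_smul_smul (a b : R) (x : m → R) (y : n → R) :
    tensorVec (a • x) (b • y) = (a * b) • tensorVec x y := by
  ext
  simp only [tensorVec, Pi.smul_apply, smul_eq_mul]
  ring

end TensorVec

theorem IsMaxEigenvalue.unitary_conj {W : Mat4} {c : ℝ} (h : IsMaxEigenvalue W c)
    {U : Mat4} (hU : U ∈ unitary Mat4) : IsMaxEigenvalue (star U * W * U) c := by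
  obtain ⟨hpsd, v, hv, hWv⟩ := h
  refine ⟨?_, star U *ᵥ v, ?_, ?_⟩
  · have := hpsd.conjTranspose_mul_mul_same U
    rwa [Matrix.mul_sub, Matrix.sub_mul, Matrix.mul_smul, Matrix.smul_mul, Matrix.mul_one,
      ← star_eq_conjTranspose, Unitary.star_mul_self_of_mem hU] at this
  · intro h0
    apply hv
    rw [← one_mulVec v, ← Unitary.mul_star_self_of_mem hU, ← mulVec_mulVec, h0, mulVec_zero]
  · rw [mulVec_mulVec, mul_assoc, mul_assoc, Unitary.mul_star_self_of_mem hU, mul_one,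
      ← mulVec_mulVec, hWv, mulVec_smul]

theorem isMaxEigenvalue_smul_of_involution {U : Mat4} (hU : U.IsHermitian) (hUU : U * U = 1)
    {c : ℝ} (hc : 0 ≤ c) {v : Fin 2 × Fin 2 → ℂ} (hv : v ≠ 0) (hUv : U *ᵥ v = v) :
    IsMaxEigenvalue ((c : ℂ) • U) c := by
  refine ⟨?_, v, hv, by rw [smul_mulVec, hUv]⟩
  rw [← smul_sub]
  exact (hU.posSemidef_one_sub_of_mul_self_eq_one hUU).smul (Complex.zero_le_real.mpr hc)

def pauliZX (a b : ℝ) : Mat2 := (a : ℂ) • σZ + (b : ℂ) • σX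

/- The eigenvectors of `σ_Y`; every `pauliZX a b` swaps them up to a scalar factor. -/
def yUp : Fin 2 → ℂ := ![1, Complex.I]
def yDown : Fin 2 → ℂ := ![1, -Complex.I]

section Pauli

open Complex

variable (a b c d : ℝ)

theorem pauliZX_isHermitian : (pauliZX a b).IsHermitian := by
  ext i j; fin_cases i <;> fin_cases j <;> simp [pauliZX, σX, σZ]

theorem pauliZX_mul_pauliZX : pauliZX a b * pauliZX c d =
    ((a * c + b * d : ℝ) : ℂ) • 1 + ((b * c - a * d : ℝ) : ℂ) • (σX * σZ) := by
  ext i j; fin_cases i <;> fin_cases j <;>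
    simp [pauliZX, σX, σZ, mul_apply, Fin.sum_univ_two] <;> ring

theorem pauliZX_mul_self {a b : ℝ} (h : a ^ 2 + b ^ 2 = 1) : pauliZX a b * pauliZX a b = 1 := by
  rw [pauliZX_mul_pauliZX, ← sq, ← sq, h, mul_comm b, sub_self]
  simp

theorem pauliZX_mulVec_yUp : pauliZX a b *ᵥ yUp = (a + b * I) • yDown := by
  ext i; fin_cases i
  · simp [pauliZX, σX, σZ, yUp, yDown, mulVec, dotProduct]
  · simp [pauliZX, σX, σZ, yUp, yDown, mulVec, dotProduct]
    linear_combination (b : ℂ) * I_sq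

theorem pauliZX_mulVec_yDown : pauliZX a b *ᵥ yDown = (a - b * I) • yUp := by
  ext i; fin_cases i
  · simp [pauliZX, σX, σZ, yUp, yDown, mulVec, dotProduct, sub_eq_add_neg]
  · simp [pauliZX, σX, σZ, yUp, yDown, mulVec, dotProduct]
    linear_combination (b : ℂ) * I_sq

theorem pauliZX_mulVec_fixed {a b : ℝ} (h : a ^ 2 + b ^ 2 = 1) :
    pauliZX a b *ᵥ ![1 + a, b] = ![1 + (a : ℂ), b] := by
  have hC : (a : ℂ) ^ 2 + (b : ℂ) ^ 2 = 1 := by exact_mod_cast h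
  ext i; fin_cases i <;> simp [pauliZX, σX, σZ, mulVec, dotProduct, Fin.sum_univ_two]
  · linear_combination hC
  · ring

theorem σZ_mul_pauliZX_mul_σZ : σZ * pauliZX a b * σZ = pauliZX a (-b) := by
  ext i j; fin_cases i <;> fin_cases j <;> simp [pauliZX, σX, σZ, mul_apply, Fin.sum_univ_two]

end Pauli

theorem σZ_eq_pauliZX : σZ = pauliZX 1 0 := by simp [pauliZX]

theorem σZ_isHermitian : σZ.IsHermitian := σZ_eq_pauliZX ▸ pauliZX_isHermitian 1 0

theorem σZ_mem_unitary : σZ ∈ unitary Mat2 := by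
  have h : σZ * σZ = 1 := by rw [σZ_eq_pauliZX, pauliZX_mul_self (by norm_num)]
  rw [Unitary.mem_iff, star_eq_conjTranspose, σZ_isHermitian.eq]
  exact ⟨h, h⟩

theorem σXZ_kronecker_σXZ_isHermitian : ((σX * σZ) ⊗ₖ (σX * σZ)).IsHermitian := by
  ext ⟨i, j⟩ ⟨k, l⟩
  fin_cases i <;> fin_cases j <;> fin_cases k <;> fin_cases l <;> simp [σX, σZ]

theorem σXZ_kronecker_σXZ_mul_self :
    (σX * σZ) ⊗ₖ (σX * σZ) * ((σX * σZ) ⊗ₖ (σX * σZ)) = 1 := by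
  rw [← mul_kronecker_mul]
  ext ⟨i, j⟩ ⟨k, l⟩
  fin_cases i <;> fin_cases j <;> fin_cases k <;> fin_cases l <;> simp [σX, σZ]

def witnessZX (a b c d : ℝ) : Mat4 := pauliZX 0 a ⊗ₖ pauliZX c d + pauliZX b 0 ⊗ₖ pauliZX d c

section Witness

open Complex

variable (a b c d : ℝ)

theorem witnessZX_isHermitian : (witnessZX a b c d).IsHermitian :=
  ((pauliZX_isHermitian _ _).kronecker (pauliZX_isHermitian _ _)).add
    ((pauliZX_isHermitian _ _).kronecker (pauliZX_isHermitian _ _))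

theorem witnessZX_mul_self {c d : ℝ} (h : c ^ 2 + d ^ 2 = 1) :
    witnessZX a b c d * witnessZX a b c d = ((a ^ 2 + b ^ 2 : ℝ) : ℂ) • 1 +
      ((2 * a * b * (d ^ 2 - c ^ 2) : ℝ) : ℂ) • ((σX * σZ) ⊗ₖ (σX * σZ)) := by
  have hC : (c : ℂ) ^ 2 + (d : ℂ) ^ 2 = 1 := by exact_mod_cast h
  simp only [witnessZX, Matrix.add_mul, Matrix.mul_add, ← mul_kronecker_mul, pauliZX_mul_pauliZX,
    add_kronecker, kronecker_add, smul_kronecker, kronecker_smul, one_kronecker_one]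
  match_scalars
  · linear_combination ((a : ℂ) ^ 2 + (b : ℂ) ^ 2) * hC
  all_goals ring

theorem witnessZX_mulVec_yDown_yUp : witnessZX a b c d *ᵥ tensorVec yDown yUp =
    (⟨(a + b) * d, (b - a) * c⟩ : ℂ) • tensorVec yUp yDown := by
  rw [witnessZX, add_mulVec, kronecker_mulVec_tensorVec, kronecker_mulVec_tensorVec,
    pauliZX_mulVec_yDown, pauliZX_mulVec_yUp, pauliZX_mulVec_yDown, pauliZX_mulVec_yUp,
    tensorVec_smul_smul, tensorVec_smul_smul, ← add_smul]
  congr 1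
  apply Complex.ext <;> simp <;> ring

theorem witnessZX_mulVec_yUp_yDown : witnessZX a b c d *ᵥ tensorVec yUp yDown =
    (⟨(a + b) * d, -((b - a) * c)⟩ : ℂ) • tensorVec yDown yUp := by
  rw [witnessZX, add_mulVec, kronecker_mulVec_tensorVec, kronecker_mulVec_tensorVec,
    pauliZX_mulVec_yDown, pauliZX_mulVec_yUp, pauliZX_mulVec_yDown, pauliZX_mulVec_yUp,
    tensorVec_smul_smul, tensorVec_smul_smul, ← add_smul]
  congr 1
  apply Complex.ext <;> simp <;> ring

theorem isMaxEigenvalue_witnessZX {a b c d : ℝ} (hcd : c ^ 2 + d ^ 2 = 1)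
    (hab : 0 < a ^ 2 + b ^ 2) (h : 0 ≤ a * b * (d ^ 2 - c ^ 2)) :
    IsMaxEigenvalue (witnessZX a b c d) √(a ^ 2 + b ^ 2 + 2 * a * b * (d ^ 2 - c ^ 2)) := by
  set s := a ^ 2 + b ^ 2 + 2 * a * b * (d ^ 2 - c ^ 2) with hs_def
  have hs : 0 < s := by linarith
  have ht : 0 < √s := Real.sqrt_pos.mpr hs
  have htt : √s ^ 2 = s := Real.sq_sqrt hs.le
  refine ⟨?_, (√s : ℂ) • tensorVec yDown yUp + (⟨(a + b) * d, (b - a) * c⟩ : ℂ) •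
    tensorVec yUp yDown, ?_, ?_⟩
  · apply (witnessZX_isHermitian a b c d).posSemidef_smul_one_sub_of_posSemidef_sq_sub
      (zero_lt_real.mpr ht)
    have hsq : (√s : ℂ) ^ 2 • 1 - witnessZX a b c d * witnessZX a b c d =
        ((2 * a * b * (d ^ 2 - c ^ 2) : ℝ) : ℂ) • (1 - (σX * σZ) ⊗ₖ (σX * σZ)) := by
      rw [witnessZX_mul_self a b hcd, ← ofReal_pow, htt, hs_def]
      push_cast
      module
    rw [hsq]
    exact (σXZ_kronecker_σXZ_isHermitian.posSemidef_one_sub_of_mul_self_eq_one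
      σXZ_kronecker_σXZ_mul_self).smul (zero_le_real.mpr (by linarith))
  · intro h0
    have h00 := congrFun h0 (0, 0)
    have h01 := congrFun h0 (0, 1)
    simp only [tensorVec, yUp, yDown, Pi.add_apply, Pi.smul_apply, Pi.zero_apply, smul_eq_mul,
      Matrix.cons_val_zero, Matrix.cons_val_one, mul_one] at h00 h01
    have : (√s : ℂ) = 0 := by
      linear_combination (h00 - I * h01 + ((√s : ℂ) - ⟨(a + b) * d, (b - a) * c⟩) * I_sq) / 2
    exact ht.ne' (ofReal_eq_zero.mp this)
  · refine mulVec_smul_add_smul_eq_smul (witnessZX_mulVec_yDown_yUp a b c d)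
      (witnessZX_mulVec_yUp_yDown a b c d) ?_
    apply Complex.ext <;> simp
    · linear_combination (a ^ 2 + b ^ 2) * hcd - htt - hs_def
    · ring

end Witness

theorem Real.cos_add_pi_div_four (α : ℝ) :
    Real.cos (α + Real.pi / 4) = (Real.cos α - Real.sin α) * (√2)⁻¹ := by
  rw [Real.cos_add, Real.cos_pi_div_four, Real.sin_pi_div_four]
  field_simp
  simp

theorem Real.sin_add_pi_div_four (α : ℝ) :
    Real.sin (α + Real.pi / 4) = (Real.cos α + Real.sin α) * (√2)⁻¹ := by
  rw [Real.sin_add, Real.cos_pi_div_four, Real.sin_pi_div_four]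
  field_simp
  simp
  ring

theorem Real.sin_two_mul_eq_sin_add_pi_div_four_sq_sub (α : ℝ) : Real.sin (2 * α) =
    Real.sin (α + Real.pi / 4) ^ 2 - Real.cos (α + Real.pi / 4) ^ 2 := by
  have h : Real.cos (2 * (α + Real.pi / 4)) = -Real.sin (2 * α) := by
    rw [show 2 * (α + Real.pi / 4) = 2 * α + Real.pi / 2 by ring, Real.cos_add_pi_div_two]
  rw [Real.cos_two_mul] at h
  linear_combination h - Real.sin_sq_add_cos_sq (α + Real.pi / 4)

section Observables

variable (α α₁ α₂ : ℝ)

theorem A1_zero_add_A1_one : A1 α 0 + A1 α 1 = pauliZX 0 (2 * Real.cos α) := by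
  simp [A1, pauliZX]
  module

theorem A1_zero_sub_A1_one : A1 α 0 - A1 α 1 = pauliZX (2 * Real.sin α) 0 := by
  simp [A1, pauliZX]
  module

theorem A2_zero :
    A2 α 0 = pauliZX (Real.cos (α + Real.pi / 4)) (Real.sin (α + Real.pi / 4)) := by
  rw [Real.cos_add_pi_div_four, Real.sin_add_pi_div_four]
  ext i j; fin_cases i <;> fin_cases j <;> simp [A2, pauliZX, σA, σB, σX, σZ] <;> ring

theorem A2_one :
    A2 α 1 = pauliZX (Real.sin (α + Real.pi / 4)) (Real.cos (α + Real.pi / 4)) := by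
  rw [Real.cos_add_pi_div_four, Real.sin_add_pi_div_four]
  ext i j; fin_cases i <;> fin_cases j <;> simp [A2, pauliZX, σA, σB, σX, σZ] <;> ring

theorem W'1_eq_witnessZX : W'1 α₁ α₂ = witnessZX (2 * Real.cos α₁) (2 * Real.sin α₁)
    (Real.cos (α₂ + Real.pi / 4)) (Real.sin (α₂ + Real.pi / 4)) := by
  rw [W'1, A1_zero_add_A1_one, A1_zero_sub_A1_one, A2_zero, A2_one, witnessZX]

theorem W'2_eq_conj : W'2 α₁ α₂ = star (σZ ⊗ₖ 1) * W'1 α₁ α₂ * (σZ ⊗ₖ 1) := by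
  rw [star_eq_conjTranspose, conjTranspose_kronecker, σZ_isHermitian.eq, conjTranspose_one, W'1,
    W'2]
  simp only [Matrix.add_mul, Matrix.mul_add, ← mul_kronecker_mul, Matrix.one_mul, Matrix.mul_one,
    A1_zero_add_A1_one, A1_zero_sub_A1_one, σZ_mul_pauliZX_mul_σZ]
  congr 2
  · ext i j; fin_cases i <;> fin_cases j <;> simp [pauliZX]
  · simp

theorem W'3_eq_smul :
    W'3 α₁ α₂ = ((4 * Real.sin α₁ : ℝ) : ℂ) • (pauliZX (-1) 0 ⊗ₖ A2 α₂ 1) := by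
  rw [W'3, A1_zero_sub_A1_one,
    show pauliZX (2 * Real.sin α₁) 0 = ((-(2 * Real.sin α₁) : ℝ) : ℂ) • pauliZX (-1) 0 by
      simp [pauliZX],
    smul_kronecker, smul_smul]
  congr 1
  push_cast
  ring

theorem isMaxEigenvalue_W'1 (h : 0 ≤ Real.sin (2 * α₁) * Real.sin (2 * α₂)) :
    IsMaxEigenvalue (W'1 α₁ α₂) (2 * √(1 + Real.sin (2 * α₁) * Real.sin (2 * α₂))) := by
  have hsin := Real.sin_two_mul_eq_sin_add_pi_div_four_sq_sub α₂
  have hrad : (2 * Real.cos α₁) ^ 2 + (2 * Real.sin α₁) ^ 2 + 2 * (2 * Real.cos α₁) *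
      (2 * Real.sin α₁) * (Real.sin (α₂ + Real.pi / 4) ^ 2 - Real.cos (α₂ + Real.pi / 4) ^ 2) =
      2 ^ 2 * (1 + Real.sin (2 * α₁) * Real.sin (2 * α₂)) := by
    rw [Real.sin_two_mul, hsin]
    linear_combination 4 * Real.cos_sq_add_sin_sq α₁
  rw [W'1_eq_witnessZX, show 2 * √(1 + Real.sin (2 * α₁) * Real.sin (2 * α₂)) =
      √(2 ^ 2 * (1 + Real.sin (2 * α₁) * Real.sin (2 * α₂))) by
    rw [Real.sqrt_mul (sq_nonneg 2), Real.sqrt_sq zero_le_two], ← hrad]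
  refine isMaxEigenvalue_witnessZX (Real.cos_sq_add_sin_sq _)
    (by nlinarith [Real.cos_sq_add_sin_sq α₁]) ?_
  rw [← hsin]
  nlinarith [Real.sin_two_mul α₁]

theorem isMaxEigenvalue_W'3 (h₁ : 0 ≤ Real.sin α₁) (h₂ : 0 ≤ Real.sin (α₂ + Real.pi / 4)) :
    IsMaxEigenvalue (W'3 α₁ α₂) (4 * Real.sin α₁) := by
  have hZ : pauliZX (-1) 0 *ᵥ ![0, 1] = ![0, 1] := by
    ext i; fin_cases i <;> simp [pauliZX, σX, σZ, mulVec, dotProduct]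
  have hunit := Real.sin_sq_add_cos_sq (α₂ + Real.pi / 4)
  rw [W'3_eq_smul, A2_one]
  refine isMaxEigenvalue_smul_of_involution
    ((pauliZX_isHermitian _ _).kronecker (pauliZX_isHermitian _ _)) ?_ (by linarith)
    (v := tensorVec ![0, 1] ![1 + (Real.sin (α₂ + Real.pi / 4) : ℂ), Real.cos (α₂ + Real.pi / 4)])
    ?_ ?_
  · rw [← mul_kronecker_mul, pauliZX_mul_self (by norm_num), pauliZX_mul_self hunit,
      one_kronecker_one]
  · intro h0
    have h10 := congrFun h0 (1, 0)
    simp only [tensorVec, Pi.zero_apply, Matrix.cons_val_zero, Matrix.cons_val_one, one_mul]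
      at h10
    have : 1 + Real.sin (α₂ + Real.pi / 4) = 0 := by exact_mod_cast h10
    linarith
  · rw [kronecker_mulVec_tensorVec, hZ, pauliZX_mulVec_fixed hunit]

end Observables

/-- the maximal eigenvalues of `W'_1`, `W'_2` equal
`2√(1 + sin 2α₁ sin 2α₂) ≤ 2√2`, and that of `W'_3` equals `4 sin α₁ ≤ 4`. -/
theorem stmt17 (α₁ α₂ : ℝ)
    (h₁ : α₁ ∈ Set.Icc 0 (Real.pi / 2)) (h₂ : α₂ ∈ Set.Icc 0 (Real.pi / 2)) :
    IsMaxEigenvalue (W'1 α₁ α₂)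
        (2 * Real.sqrt (1 + Real.sin (2 * α₁) * Real.sin (2 * α₂)))
    ∧ IsMaxEigenvalue (W'2 α₁ α₂)
        (2 * Real.sqrt (1 + Real.sin (2 * α₁) * Real.sin (2 * α₂)))
    ∧ IsMaxEigenvalue (W'3 α₁ α₂) (4 * Real.sin α₁)
    ∧ 2 * Real.sqrt (1 + Real.sin (2 * α₁) * Real.sin (2 * α₂)) ≤ 2 * Real.sqrt 2
    ∧ 4 * Real.sin α₁ ≤ 4 := by
  obtain ⟨h₁₀, h₁π⟩ := h₁
  obtain ⟨h₂₀, h₂π⟩ := h₂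
  have hπ := Real.pi_pos
  have hsin₁ : 0 ≤ Real.sin (2 * α₁) :=
    Real.sin_nonneg_of_nonneg_of_le_pi (by linarith) (by linarith)
  have hsin₂ : 0 ≤ Real.sin (2 * α₂) :=
    Real.sin_nonneg_of_nonneg_of_le_pi (by linarith) (by linarith)
  have hW'1 := isMaxEigenvalue_W'1 α₁ α₂ (mul_nonneg hsin₁ hsin₂)
  refine ⟨hW'1, ?_, isMaxEigenvalue_W'3 α₁ α₂ ?_ ?_, ?_, ?_⟩
  · rw [W'2_eq_conj]
    exact hW'1.unitary_conj (kronecker_mem_unitary σZ_mem_unitary (one_mem _))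
  · exact Real.sin_nonneg_of_nonneg_of_le_pi h₁₀ (by linarith)
  · exact Real.sin_nonneg_of_nonneg_of_le_pi (by linarith) (by linarith)
  · gcongr
    nlinarith [Real.sin_le_one (2 * α₁), Real.sin_le_one (2 * α₂)]
  · linarith [Real.sin_le_one α₁]
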